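/- Let A be a compact Hausdorff topological space and f₁,…,f_k : A → A continuous maps such that the IFS is forward minimal and contractible (with attractor the whole space A). Assume in addition that either the IFS is strongly-fibred or every f_i is a homeomorphism of A. Let Φ : Ω × A → Ω × A be the one-step skew product Φ(ω, x) = (σ(ω), f_{ω₁}(x)), where Ω = {1,…,k}^ℕ carries the product topology. Then for every disjunctive sequence ω ∈ Ω and every x ∈ A, the orbit {Φⁿ(ω, x) : n ∈ ℕ} is dense in Ω × A. -/

import Mathlib

open Set Filter Topology

/-- The Hutchinson operator of the IFS generated by `f 0, …, f (k-1)`. -/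
def Hutch {X : Type*} {k : ℕ} (f : Fin k → X → X) (S : Set X) : Set X :=
  ⋃ i, f i '' S

/-- The semigroup generated by the maps `f 0, …, f (k-1)`: all finite (nonempty)
compositions. -/
def IFSsemigroup {X : Type*} {k : ℕ} (f : Fin k → X → X) : Set (X → X) :=
  {g | ∃ l : List (Fin k), l ≠ [] ∧ g = (l.map f).foldr (· ∘ ·) id}

/-- The Γ-orbit of a point. -/
def GammaOrbit {X : Type*} {k : ℕ} (f : Fin k → X → X) (x : X) : Set X :=
  {y | ∃ g ∈ IFSsemigroup f, g x = y}

/-- Convergence of a sequence of sets to a compact set `L` in the Vietoris sense. -/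
def VTendsto {X : Type*} [TopologicalSpace X] (A : ℕ → Set X) (L : Set X) : Prop :=
  ∀ U V : Set X, IsOpen U → L ⊆ U → IsOpen V → (V ∩ L).Nonempty →
    ∃ n₀ : ℕ, ∀ n ≥ n₀, A n ⊆ U ∧ (A n ∩ V).Nonempty

/-- The pointwise basin of a compact set `A`. -/
def BasinP {X : Type*} [TopologicalSpace X] {k : ℕ} (f : Fin k → X → X) (A : Set X) :
    Set X :=
  {x | VTendsto (fun n => (Hutch f)^[n] {x}) A}

/-- `A` is a pointwise attractor. -/
def IsPointwiseAttractor {X : Type*} [TopologicalSpace X] {k : ℕ}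
    (f : Fin k → X → X) (A : Set X) : Prop :=
  IsCompact A ∧ A.Nonempty ∧ ∃ U : Set X, IsOpen U ∧ A ⊆ U ∧ U ⊆ BasinP f A

/-- `A` is a strict attractor. -/
def IsStrictAttractor {X : Type*} [TopologicalSpace X] {k : ℕ}
    (f : Fin k → X → X) (A : Set X) : Prop :=
  IsCompact A ∧ A.Nonempty ∧ ∃ U : Set X, IsOpen U ∧ A ⊆ U ∧
    ∀ K : Set X, K.Nonempty → IsCompact K → K ⊆ U →
      VTendsto (fun n => (Hutch f)^[n] K) A

/-- The basin of a strict attractor: the union of all open neighborhoods witnessing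
the attraction. -/
def BasinS {X : Type*} [TopologicalSpace X] {k : ℕ} (f : Fin k → X → X) (A : Set X) :
    Set X :=
  ⋃₀ {U : Set X | IsOpen U ∧ A ⊆ U ∧
    ∀ K : Set X, K.Nonempty → IsCompact K → K ⊆ U →
      VTendsto (fun n => (Hutch f)^[n] K) A}

/-- `f_ω^n = f_{ω n-1} ∘ ⋯ ∘ f_{ω 0}` (the orbital branch corresponding to `ω`). -/
def FibIter {X : Type*} {k : ℕ} (f : Fin k → X → X) (ω : ℕ → Fin k) : ℕ → X → X
  | 0 => id
  | n + 1 => f (ω n) ∘ FibIter f ω n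

/-- The tail `{f_ω^m x : m ≥ n}` of the ω-fiberwise orbit of `x`. -/
def TailOrbit {X : Type*} {k : ℕ} (f : Fin k → X → X) (ω : ℕ → Fin k) (x : X) (n : ℕ) :
    Set X :=
  {y | ∃ m ≥ n, FibIter f ω m x = y}

/-- The ω-fiberwise orbit `O⁺_ω(x) = {f_ω^n x : n ≥ 1}`. -/
def Oplus {X : Type*} {k : ℕ} (f : Fin k → X → X) (ω : ℕ → Fin k) (x : X) : Set X :=
  TailOrbit f ω x 1

/-- The shift map on `Ω = {1,…,k}^ℕ`. -/
def shiftSeq {k : ℕ} (ω : ℕ → Fin k) : ℕ → Fin k := fun n => ω (n + 1)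

/-- A sequence is disjunctive if its orbit under the shift is dense in
`Ω = {1,…,k}^ℕ` (with the product topology). -/
def Disjunctive {k : ℕ} (ω : ℕ → Fin k) : Prop :=
  Dense (Set.range fun n => shiftSeq^[n] ω)

/-- The IFS is forward minimal on the whole space. -/
def ForwardMinimal {X : Type*} [TopologicalSpace X] {k : ℕ} (f : Fin k → X → X) : Prop :=
  ∀ B : Set X, B.Nonempty → IsClosed B → (∀ i, f i '' B ⊆ B) → B = Set.univ

/-- The IFS is backward minimal on the whole space. -/
def BackwardMinimal {X : Type*} [TopologicalSpace X] {k : ℕ} (f : Fin k → X → X) : Prop :=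
  ∀ B : Set X, B.Nonempty → IsClosed B →
    (∀ g ∈ IFSsemigroup f, (g ⁻¹' B).Nonempty ∧ g ⁻¹' B ⊆ B) → B = Set.univ

/-- The attractor `A` is contractible. -/
def ContractibleAttractor {X : Type*} [TopologicalSpace X] {k : ℕ}
    (f : Fin k → X → X) (A : Set X) : Prop :=
  ∀ K : Set X, K ⊆ A → IsCompact K → K ≠ A →
    ∀ 𝒰 : Set (Set X), (∀ U ∈ 𝒰, IsOpen U) → A ⊆ ⋃₀ 𝒰 →
      ∃ g ∈ IFSsemigroup f, ∃ U ∈ 𝒰, g '' K ⊆ U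

/-- `f_{ω 0} ∘ ⋯ ∘ f_{ω (n-1)}` (compositions in the reverse order). -/
def FibDown {X : Type*} {k : ℕ} (f : Fin k → X → X) (ω : ℕ → Fin k) : ℕ → X → X
  | 0 => id
  | n + 1 => FibDown f ω n ∘ f (ω n)

/-- The attractor `A` is strongly-fibred. -/
def StronglyFibred {X : Type*} [TopologicalSpace X] {k : ℕ}
    (f : Fin k → X → X) (A : Set X) : Prop :=
  ∀ U : Set X, IsOpen U → (U ∩ A).Nonempty →
    ∃ ω : ℕ → Fin k, (⋂ n, FibDown f ω n '' A) ⊆ U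

section Aux

variable {A : Type*} {k : ℕ}

lemma shiftSeq_iterate (ω : ℕ → Fin k) : ∀ n j, (shiftSeq^[n] ω) j = ω (n + j) := by
  intro n
  induction n generalizing ω with
  | zero => intro j; simp
  | succ n ih =>
    intro j
    rw [Function.iterate_succ_apply, ih (shiftSeq ω) j]
    show ω (n + j + 1) = _
    congr 1; omega

variable (f : Fin k → A → A)

lemma fibIter_congr (l : ℕ) (τ τ' : ℕ → Fin k) (h : ∀ j < l, τ j = τ' j) (x : A) :
    FibIter f τ l x = FibIter f τ' l x := by
  induction l with
  | zero => rfl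
  | succ n ih =>
    show f (τ n) (FibIter f τ n x) = f (τ' n) (FibIter f τ' n x)
    rw [h n (by omega), ih (fun j hj => h j (by omega))]

lemma fibIter_add (ω : ℕ → Fin k) (n : ℕ) (x : A) :
    ∀ l, FibIter f ω (n + l) x = FibIter f (fun j => ω (n + j)) l (FibIter f ω n x) := by
  intro l
  induction l with
  | zero => rfl
  | succ l ih =>
    show f (ω (n + l)) (FibIter f ω (n + l) x)
        = f (ω (n + l)) (FibIter f (fun j => ω (n + j)) l (FibIter f ω n x))
    rw [ih]

lemma fibIter_shift (τ : ℕ → Fin k) (x : A) :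
    ∀ l, FibIter f τ (l + 1) x = FibIter f (fun j => τ (j + 1)) l (f (τ 0) x) := by
  intro l
  induction l with
  | zero => rfl
  | succ l ih =>
    show f (τ (l + 1)) (FibIter f τ (l + 1) x)
        = f (τ (l + 1)) (FibIter f (fun j => τ (j + 1)) l (f (τ 0) x))
    rw [ih]

lemma fibIter_rev (ρ : ℕ → Fin k) : ∀ (l : ℕ) (x : A),
    FibIter f (fun j => ρ (l - 1 - j)) l x = FibDown f ρ l x := by
  intro l
  induction l with
  | zero => intro x; rfl
  | succ l ih =>
    intro x
    rw [fibIter_shift]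
    have h1 : (l + 1 - 1 - 0) = l := by omega
    rw [fibIter_congr f l (fun j => ρ (l + 1 - 1 - (j + 1))) (fun j => ρ (l - 1 - j))
      (fun j hj => by show ρ (l + 1 - 1 - (j + 1)) = ρ (l - 1 - j); congr 1; omega), h1]
    exact ih (f (ρ l) x)

def Gl (f : Fin k → A → A) (l : List (Fin k)) : A → A := (l.map f).foldr (· ∘ ·) id

lemma Gl_append (l₁ l₂ : List (Fin k)) : Gl f (l₁ ++ l₂) = Gl f l₁ ∘ Gl f l₂ := by
  induction l₁ with
  | nil => rfl
  | cons a t ih =>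
    show f a ∘ Gl f (t ++ l₂) = (f a ∘ Gl f t) ∘ Gl f l₂
    rw [ih]; rfl

lemma Gl_eq_fibIter (d : Fin k) (L : List (Fin k)) (x : A) :
    Gl f L x = FibIter f (fun j => L.getD (L.length - 1 - j) d) L.length x := by
  induction L generalizing x with
  | nil => rfl
  | cons a t ih =>
    show f a (Gl f t x) = f ((a :: t).getD ((a :: t).length - 1 - t.length) d)
        (FibIter f (fun j => (a :: t).getD ((a :: t).length - 1 - j) d) t.length x)
    have h0 : (a :: t).length - 1 - t.length = 0 := by simp
    rw [h0]
    have hcg : FibIter f (fun j => (a :: t).getD ((a :: t).length - 1 - j) d) t.length x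
        = FibIter f (fun j => t.getD (t.length - 1 - j) d) t.length x := by
      apply fibIter_congr
      intro j hj
      have h1 : (a :: t).length - 1 - j = (t.length - 1 - j) + 1 := by
        simp only [List.length_cons]; omega
      rw [h1, List.getD_cons_succ]
    rw [hcg, ← ih]
    rfl

lemma Gl_continuous [TopologicalSpace A] (hf : ∀ i, Continuous (f i)) (l : List (Fin k)) :
    Continuous (Gl f l) := by
  induction l with
  | nil => exact continuous_id
  | cons a t ih => exact (hf a).comp ih

lemma fibIter_continuous [TopologicalSpace A] (hf : ∀ i, Continuous (f i)) (τ : ℕ → Fin k) :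
    ∀ n, Continuous (FibIter f τ n) := by
  intro n
  induction n with
  | zero => exact continuous_id
  | succ n ih => exact (hf _).comp ih

lemma fibDown_continuous [TopologicalSpace A] (hf : ∀ i, Continuous (f i)) (τ : ℕ → Fin k) :
    ∀ n, Continuous (FibDown f τ n) := by
  intro n
  induction n with
  | zero => exact continuous_id
  | succ n ih => exact ih.comp (hf _)

lemma fibIter_homeo [TopologicalSpace A] (hf : ∀ i, IsHomeomorph (f i)) (τ : ℕ → Fin k) :
    ∀ n, IsHomeomorph (FibIter f τ n) := by
  intro n
  induction n with
  | zero => exact IsHomeomorph.id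
  | succ n ih => exact (hf _).comp ih

end Aux

section Part2

variable {A : Type*} {k : ℕ}

lemma disj_word (ω : ℕ → Fin k) (hω : Disjunctive ω) (τ : ℕ → Fin k) (m : ℕ) :
    ∃ n, ∀ i < m, ω (n + i) = τ i := by
  have hC : IsOpen {g : ℕ → Fin k | ∀ i < m, g i = τ i} := by
    have he : {g : ℕ → Fin k | ∀ i < m, g i = τ i}
        = ⋂ i ∈ Finset.range m, (fun g : ℕ → Fin k => g i) ⁻¹' {τ i} := by
      ext g; simp [Finset.mem_range]
    rw [he]
    exact isOpen_biInter_finset fun i _ =>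
      (continuous_apply i).isOpen_preimage _ (isOpen_discrete _)
  obtain ⟨s, ⟨n, rfl⟩, hs⟩ := hω.exists_mem_open hC ⟨τ, fun i _ => rfl⟩
  exact ⟨n, fun i hi => by rw [← shiftSeq_iterate ω n i]; exact hs i hi⟩

lemma disj_word' (ω : ℕ → Fin k) (hω : Disjunctive ω) (τ : ℕ → Fin k) (m N : ℕ) :
    ∃ n ≥ N, ∀ i < m, ω (n + i) = τ i := by
  obtain ⟨n₀, hn₀⟩ := disj_word ω hω (fun j => if j < N then ω j else τ (j - N)) (N + m)
  refine ⟨n₀ + N, by omega, fun i hi => ?_⟩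
  have h := hn₀ (N + i) (by omega)
  rw [if_neg (by omega)] at h
  have h2 : N + i - N = i := by omega
  rw [h2] at h
  have h3 : n₀ + N + i = n₀ + (N + i) := by omega
  rw [h3]; exact h

variable (f : Fin k → A → A)

lemma star [TopologicalSpace A]
    (hf : ∀ i, Continuous (f i)) (hmin : ForwardMinimal f)
    (hcon : ContractibleAttractor f (univ : Set A))
    (K : Set A) (hK : IsCompact K) (hKne : K ≠ univ)
    (V : Set A) (hV : IsOpen V) (hVne : V.Nonempty) :
    ∃ L : List (Fin k), Gl f L '' K ⊆ V := by
  have hcover : ∀ b : A, ∃ l : List (Fin k), Gl f l b ∈ V := by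
    by_contra hc
    push_neg at hc
    obtain ⟨b, hb⟩ := hc
    set B : Set A := {b | ∀ l : List (Fin k), Gl f l b ∉ V} with hB
    have hBc : IsClosed B := by
      have : B = ⋂ l : List (Fin k), Gl f l ⁻¹' Vᶜ := by
        ext b; simp [hB, mem_iInter]
      rw [this]
      exact isClosed_iInter fun l => hV.isClosed_compl.preimage (Gl_continuous f hf l)
    have hBinv : ∀ i, f i '' B ⊆ B := by
      rintro i y ⟨b, hb', rfl⟩ l
      have : Gl f (l ++ [i]) b ∉ V := hb' (l ++ [i])
      rw [Gl_append] at this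
      exact this
    have hBuniv : B = univ := hmin B ⟨b, hb⟩ hBc hBinv
    obtain ⟨v, hv⟩ := hVne
    have : v ∈ B := hBuniv ▸ mem_univ v
    exact this [] hv
  set 𝒰 : Set (Set A) := {U | ∃ l : List (Fin k), U = Gl f l ⁻¹' V} with h𝒰
  obtain ⟨g, ⟨l₀, _, hg⟩, U, ⟨l₁, hU⟩, hsub⟩ :=
    hcon K (subset_univ K) hK hKne 𝒰
      (by rintro U ⟨l, rfl⟩; exact hV.preimage (Gl_continuous f hf l))
      (by intro a _
          obtain ⟨l, hl⟩ := hcover a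
          exact ⟨Gl f l ⁻¹' V, ⟨l, rfl⟩, hl⟩)
  subst hg hU
  refine ⟨l₁ ++ l₀, ?_⟩
  rw [Gl_append, image_comp]
  exact (image_mono (f := Gl f l₁) hsub).trans (image_preimage_subset _ _)

end Part2

section Part3

variable {A : Type*} {k : ℕ}

lemma main_hit [TopologicalSpace A] [T2Space A] [CompactSpace A]
    (f : Fin k → A → A) (hf : ∀ i, Continuous (f i))
    (hmin : ForwardMinimal f) (hcon : ContractibleAttractor f (univ : Set A))
    (hsf : StronglyFibred f (univ : Set A) ∨ ∀ i, IsHomeomorph (f i))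
    (ω : ℕ → Fin k) (hω : Disjunctive ω) (x : A)
    (m : ℕ) (ρt : ℕ → Fin k) (V : Set A) (hV : IsOpen V) (hVne : V.Nonempty) :
    ∃ n, (∀ i < m, ω (n + i) = ρt i) ∧ FibIter f ω n x ∈ V := by
  rcases hsf with hSF | hHomeo
  · -- strongly fibred branch
    obtain ⟨ρ, hρ⟩ := hSF V hV (by simpa using hVne)
    have hcpt : ∀ n, IsCompact (FibDown f ρ n '' univ) :=
      fun n => isCompact_univ.image (fibDown_continuous f hf ρ n)
    have hanti : Antitone (fun n => FibDown f ρ n '' (univ : Set A)) := by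
      apply antitone_nat_of_succ_le
      intro n
      show FibDown f ρ (n + 1) '' univ ⊆ FibDown f ρ n '' univ
      have : FibDown f ρ (n+1) '' univ = FibDown f ρ n '' (f (ρ n) '' univ) := by
        rw [← image_comp]; rfl
      rw [this]
      exact image_mono (subset_univ _)
    obtain ⟨ℓ, hℓ⟩ := exists_subset_nhds_of_isCompact' hanti.directed_ge hcpt
      (fun n => (hcpt n).isClosed) (fun y hy => hV.mem_nhds (hρ hy))
    obtain ⟨n, hn⟩ := disj_word ω hω
      (fun j => if j < ℓ then ρ (ℓ - 1 - j) else ρt (j - ℓ)) (ℓ + m)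
    refine ⟨n + ℓ, ?_, ?_⟩
    · intro i hi
      have h := hn (ℓ + i) (by omega)
      rw [if_neg (by omega)] at h
      have h2 : ℓ + i - ℓ = i := by omega
      rw [h2] at h
      have h3 : n + ℓ + i = n + (ℓ + i) := by omega
      rw [h3]; exact h
    · rw [fibIter_add]
      have hcg : FibIter f (fun j => ω (n + j)) ℓ (FibIter f ω n x)
          = FibDown f ρ ℓ (FibIter f ω n x) := by
        rw [fibIter_congr f ℓ (fun j => ω (n + j)) (fun j => ρ (ℓ - 1 - j))
          (fun j hj => by
            show ω (n + j) = ρ (ℓ - 1 - j)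
            rw [hn j (by omega), if_pos hj])]
        exact fibIter_rev f ρ ℓ _
      rw [hcg]
      exact hℓ ⟨_, mem_univ _, rfl⟩
  · -- homeomorphism branch
    set d : Fin k := ρt 0 with hd
    set y : ℕ → A := fun n => FibIter f ω n x with hy
    set I : Set ℕ := {n | ∀ i < m, ω (n + i) = ρt i} with hI
    have hIunb : ∀ N, ∃ n ≥ N, n ∈ I := by
      intro N
      obtain ⟨n, hn1, hn2⟩ := disj_word' ω hω ρt m N
      exact ⟨n, hn1, hn2⟩
    set F : Filter A := Filter.map y (atTop ⊓ 𝓟 I) with hF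
    have hbase : (atTop ⊓ 𝓟 I).NeBot := by
      rw [inf_principal_neBot_iff]
      intro U hU
      rw [mem_atTop_sets] at hU
      obtain ⟨N, hN⟩ := hU
      obtain ⟨n, hn1, hn2⟩ := hIunb N
      exact ⟨n, hN n hn1, hn2⟩
    have hFne : F.NeBot := hbase.map y
    set K : Set A := {z | ClusterPt z F} with hK
    have hKcl : IsClosed K := isClosed_setOf_clusterPt
    by_cases hcase : (K ∩ V).Nonempty
    · obtain ⟨z, hzK, hzV⟩ := hcase
      have hyI : y '' I ∈ F := by
        rw [hF, mem_map]
        exact mem_inf_of_right (fun n hn => mem_image_of_mem y hn)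
      haveI : (𝓝 z ⊓ F).NeBot := hzK
      have hne : (V ∩ y '' I).Nonempty := by
        have : V ∩ y '' I ∈ 𝓝 z ⊓ F :=
          inter_mem (mem_inf_of_left (hV.mem_nhds hzV)) (mem_inf_of_right hyI)
        exact Filter.nonempty_of_mem this
      obtain ⟨_, hvV, n, hnI, rfl⟩ := hne
      exact ⟨n, hnI, hvV⟩
    · -- K misses V
      have hKne : K ≠ univ := by
        intro h
        obtain ⟨v, hv⟩ := hVne
        exact hcase ⟨v, h ▸ mem_univ v, hv⟩
      have hKcpt : IsCompact K := hKcl.isCompact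
      have hGw : IsHomeomorph (FibIter f ρt m) := fibIter_homeo f hHomeo ρt m
      set K' : Set A := FibIter f ρt m '' K with hK'
      have hK'cpt : IsCompact K' := hKcpt.image (fibIter_continuous f hf ρt m)
      have hK'ne : K' ≠ univ := by
        intro h
        rw [hK'] at h
        have h2 := preimage_image_eq K hGw.bijective.injective
        rw [h, preimage_univ] at h2
        exact hKne h2.symm
      obtain ⟨L, hL⟩ := star f hf hmin hcon K' hK'cpt hK'ne V hV hVne
      set N : Set A := (Gl f L ∘ FibIter f ρt m) ⁻¹' V with hN
      have hNopen : IsOpen N :=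
        hV.preimage ((Gl_continuous f hf L).comp (fibIter_continuous f hf ρt m))
      have hKN : K ⊆ N := by
        intro z hz
        exact hL ⟨FibIter f ρt m z, mem_image_of_mem _ hz, rfl⟩
      -- eventually over I, y n ∈ N
      have hNbd : ∃ N₀, ∀ n ≥ N₀, n ∈ I → y n ∈ N := by
        by_contra hc
        push_neg at hc
        set J : Set ℕ := I ∩ {n | y n ∉ N} with hJ
        have hbase' : (atTop ⊓ 𝓟 J).NeBot := by
          rw [inf_principal_neBot_iff]
          intro U hU
          rw [mem_atTop_sets] at hU
          obtain ⟨N₁, hN₁⟩ := hU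
          obtain ⟨n, hn1, hn2, hn3⟩ := hc N₁
          exact ⟨n, hN₁ n hn1, hn2, hn3⟩
        have : (Filter.map y (atTop ⊓ 𝓟 J)).NeBot := hbase'.map y
        obtain ⟨z, _, hz⟩ := isCompact_univ.exists_clusterPt
          (f := Filter.map y (atTop ⊓ 𝓟 J)) (le_principal_iff.2 univ_mem)
        have hzK : z ∈ K := by
          apply hz.mono
          apply Filter.map_mono
          exact inf_le_inf_left _ (principal_mono.2 (inter_subset_left))
        have hzN : z ∈ Nᶜ := by
          have hmem : Nᶜ ∈ Filter.map y (atTop ⊓ 𝓟 J) := by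
            rw [mem_map]
            exact mem_inf_of_right (fun n hn => hn.2)
          have : z ∈ closure Nᶜ := by
            rw [mem_closure_iff_clusterPt]
            exact hz.mono (le_principal_iff.2 hmem)
          rwa [hNopen.isClosed_compl.closure_eq] at this
        exact hzN (hKN hzK)
      obtain ⟨N₀, hN₀⟩ := hNbd
      obtain ⟨n, hnN₀, hn⟩ := disj_word' ω hω
        (fun j =>
          if j < m then ρt j
          else if j < m + L.length then L.getD (L.length - 1 - (j - m)) d
          else ρt (j - (m + L.length)))
        (m + L.length + m) N₀
      have hnI : n ∈ I := by
        intro i hi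
        have h := hn i (by omega)
        rwa [if_pos hi] at h
      have hyn : y n ∈ N := hN₀ n hnN₀ hnI
      refine ⟨n + m + L.length, ?_, ?_⟩
      · intro i hi
        have h := hn (m + L.length + i) (by omega)
        rw [if_neg (by omega), if_neg (by omega)] at h
        have h2 : m + L.length + i - (m + L.length) = i := by omega
        rw [h2] at h
        have h3 : n + m + L.length + i = n + (m + L.length + i) := by omega
        rw [h3]; exact h
      · have step1 : FibIter f ω (n + m) x = FibIter f ρt m (y n) := by
          rw [fibIter_add]
          apply fibIter_congr
          intro j hj
          show ω (n + j) = ρt j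
          have h := hn j (by omega)
          rwa [if_pos hj] at h
        have step2 : FibIter f ω (n + m + L.length) x
            = Gl f L (FibIter f ω (n + m) x) := by
          rw [fibIter_add, Gl_eq_fibIter f d L]
          apply fibIter_congr
          intro j hj
          show ω (n + m + j) = L.getD (L.length - 1 - j) d
          have h := hn (m + j) (by omega)
          rw [if_neg (by omega), if_pos (by omega)] at h
          have h2 : m + j - m = j := by omega
          rw [h2] at h
          have h3 : n + m + j = n + (m + j) := by omega
          rw [h3]; exact h
        rw [step2, step1]
        exact hyn

end Part3

section Part4

variable {A : Type*} {k : ℕ}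

lemma skew_iter (f : Fin k → A → A) (ω : ℕ → Fin k) (x : A) :
    ∀ n, (fun p : (ℕ → Fin k) × A => (shiftSeq p.1, f (p.1 0) p.2))^[n] (ω, x)
      = (shiftSeq^[n] ω, FibIter f ω n x) := by
  intro n
  induction n with
  | zero => rfl
  | succ n ih =>
    rw [Function.iterate_succ_apply', ih, Function.iterate_succ_apply']
    have h0 : (shiftSeq^[n] ω) 0 = ω n := by rw [shiftSeq_iterate]; rfl
    show (shiftSeq (shiftSeq^[n] ω), f ((shiftSeq^[n] ω) 0) (FibIter f ω n x))
        = (shiftSeq (shiftSeq^[n] ω), f (ω n) (FibIter f ω n x))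
    rw [h0]

end Part4

theorem skew_product_orbit_dense
    {A : Type*} [TopologicalSpace A] [T2Space A] [CompactSpace A] {k : ℕ}
    (f : Fin k → A → A) (hf : ∀ i, Continuous (f i))
    (hmin : ForwardMinimal f)
    (hcon : ContractibleAttractor f (Set.univ : Set A))
    (hsf : StronglyFibred f (Set.univ : Set A) ∨ ∀ i, IsHomeomorph (f i)) :
    ∀ ω : ℕ → Fin k, Disjunctive ω → ∀ x : A,
      Dense (Set.range fun n =>
        (fun p : (ℕ → Fin k) × A => (shiftSeq p.1, f (p.1 0) p.2))^[n] (ω, x)) := by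
  intro ω hω x
  rw [dense_iff_inter_open]
  intro U hU hUne
  obtain ⟨⟨ρ, a⟩, hpa⟩ := hUne
  obtain ⟨P, Q, hP, hQ, hρP, haQ, hPQ⟩ := isOpen_prod_iff.1 hU ρ a hpa
  have hPn : P ∈ 𝓝 ρ := hP.mem_nhds hρP
  rw [nhds_pi] at hPn
  obtain ⟨J, hJfin, t, ht, hsub⟩ := Filter.mem_pi.1 hPn
  obtain ⟨b, hb⟩ := hJfin.bddAbove
  have hcyl : ∀ g : ℕ → Fin k, (∀ i < b + 1, g i = ρ i) → g ∈ P := by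
    intro g hg
    apply hsub
    intro i hi
    have hib : i ≤ b := hb hi
    rw [hg i (by omega)]
    exact mem_of_mem_nhds (ht i)
  obtain ⟨n, hn1, hn2⟩ := main_hit f hf hmin hcon hsf ω hω x (b + 1) ρ Q hQ ⟨a, haQ⟩
  refine ⟨_, ⟨hPQ ?_, ⟨n, rfl⟩⟩⟩
  show (fun p : (ℕ → Fin k) × A => (shiftSeq p.1, f (p.1 0) p.2))^[n] (ω, x) ∈ P ×ˢ Q
  rw [skew_iter f ω x n]
  refine ⟨hcyl _ fun i hi => ?_, hn2⟩
  show (shiftSeq^[n] ω) i = ρ i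
  rw [shiftSeq_iterate]
  exact hn1 i hi
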